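/- arXiv:1411.0764 — 2 statements merged into one kernel-verified Lean document; each statement's English description precedes it below -/
import Mathlib

section
/- For every d ∈ ℝ^m satisfying the constraints Lᵀ d = 0, the penalized least squares objective satisfies the exact decomposition F(d) = F(d̃) + (d − d̃)ᵀ B⁻¹ (d − d̃), where d̃ = B(b − L Λ̂) and Λ̂ = (Lᵀ B L)⁻¹ Lᵀ B b. -/
/-!
Expanding the square, `F d = dᵀ B⁻¹ d - 2 bᵀ d + σ⁻² ∑ yᵢ²`. The vector `d̃` satisfies the Lagrange
conditions `B⁻¹ d̃ = b - L Λ̂` and `Lᵀ d̃ = 0` (the latter because `Lᵀ B L` is invertible, `L` having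
full column rank). For feasible `d` the cross term `(d - d̃)ᵀ (B⁻¹ d̃ - b) = -(Lᵀ (d - d̃))ᵀ Λ̂`
vanishes, so completing the square at `d̃` gives the decomposition.
-/

open Matrix

namespace Matrix

theorem mulVec_injective_of_rank_eq_card {m n K : Type*} [Fintype n] [Field K]
    {A : Matrix m n K} (hA : A.rank = Fintype.card n) : Function.Injective A.mulVec :=
  mulVec_injective_iff.mpr <| linearIndependent_iff_card_eq_finrank_span.mpr <| by
    rw [← hA, rank_eq_finrank_span_cols]; rfl

variable {m n ι R : Type*} [Fintype m] [Fintype n] [Fintype ι]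

section CommRing

variable [CommRing R]

theorem IsSymm.dotProduct_mulVec_comm {A : Matrix m m R} (hA : A.IsSymm) (u v : m → R) :
    u ⬝ᵥ (A *ᵥ v) = v ⬝ᵥ (A *ᵥ u) := by
  rw [dotProduct_mulVec, ← mulVec_transpose, hA.eq, dotProduct_comm]

theorem dotProduct_mulVec_eq_zero_of_transpose_mulVec_eq_zero {L : Matrix m n R} {v : m → R}
    (hv : Lᵀ *ᵥ v = 0) (μ : n → R) : v ⬝ᵥ (L *ᵥ μ) = 0 := by
  rw [dotProduct_mulVec, ← mulVec_transpose, hv, zero_dotProduct]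

theorem IsSymm.dotProduct_mulVec_sub_two_mul_eq_of_lagrange {A : Matrix m m R} (hA : A.IsSymm)
    {L : Matrix m n R} {b d d₀ : m → R} {μ : n → R}
    (hd₀ : A *ᵥ d₀ = b - L *ᵥ μ) (hLd₀ : Lᵀ *ᵥ d₀ = 0) (hLd : Lᵀ *ᵥ d = 0) :
    d ⬝ᵥ (A *ᵥ d) - 2 * (b ⬝ᵥ d) =
      d₀ ⬝ᵥ (A *ᵥ d₀) - 2 * (b ⬝ᵥ d₀) + (d - d₀) ⬝ᵥ (A *ᵥ (d - d₀)) := by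
  have hcross : d ⬝ᵥ (A *ᵥ d₀) = b ⬝ᵥ d := by
    rw [hd₀, dotProduct_sub, dotProduct_mulVec_eq_zero_of_transpose_mulVec_eq_zero hLd,
      sub_zero, dotProduct_comm]
  have hself : d₀ ⬝ᵥ (A *ᵥ d₀) = b ⬝ᵥ d₀ := by
    rw [hd₀, dotProduct_sub, dotProduct_mulVec_eq_zero_of_transpose_mulVec_eq_zero hLd₀,
      sub_zero, dotProduct_comm]
  rw [mulVec_sub, dotProduct_sub, sub_dotProduct, sub_dotProduct, hA.dotProduct_mulVec_comm d₀ d,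
    hcross, hself]
  ring

theorem transpose_mulVec_mulVec_sub_eq_zero [DecidableEq n] {B : Matrix m m R} {L : Matrix m n R}
    (h : IsUnit (Lᵀ * B * L).det) (b : m → R) :
    Lᵀ *ᵥ (B *ᵥ (b - L *ᵥ ((Lᵀ * B * L)⁻¹ *ᵥ (Lᵀ *ᵥ (B *ᵥ b))))) = 0 := by
  simp only [mulVec_sub, mulVec_mulVec, ← Matrix.mul_assoc, mul_nonsing_inv _ h, Matrix.one_mul,
    sub_self]

theorem dotProduct_sum_vecMulVec_mulVec (X : ι → m → R) (d : m → R) :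
    d ⬝ᵥ ((∑ i, vecMulVec (X i) (X i)) *ᵥ d) = ∑ i, (X i ⬝ᵥ d) ^ 2 := by
  simp only [sum_mulVec, dotProduct_sum, vecMulVec_mulVec, op_smul_eq_smul, dotProduct_smul,
    smul_eq_mul, sq]
  exact Finset.sum_congr rfl fun i _ => by rw [dotProduct_comm]

theorem sum_sq_sub_dotProduct_add_penalty_eq (c lam : R) (Ω : Matrix m m R) (y : ι → R)
    (X : ι → m → R) (d : m → R) :
    c * ∑ i, (y i - X i ⬝ᵥ d) ^ 2 + lam * (d ⬝ᵥ (Ω *ᵥ d)) =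
      d ⬝ᵥ ((lam • Ω + c • ∑ i, vecMulVec (X i) (X i)) *ᵥ d)
        - 2 * ((c • ∑ i, y i • X i) ⬝ᵥ d) + c * ∑ i, y i ^ 2 := by
  simp only [add_mulVec, smul_mulVec, dotProduct_add, dotProduct_smul,
    dotProduct_sum_vecMulVec_mulVec, smul_dotProduct, sum_dotProduct, smul_eq_mul, sub_sq,
    Finset.sum_add_distrib, Finset.sum_sub_distrib, mul_assoc, ← Finset.mul_sum]
  ring

end CommRing

theorem posDef_smul_add_smul_sum_vecMulVec {Ω : Matrix m m ℝ} (hΩ : Ω.PosDef) {lam c : ℝ}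
    (hlam : 0 < lam) (hc : 0 ≤ c) (X : ι → m → ℝ) :
    (lam • Ω + c • ∑ i, vecMulVec (X i) (X i)).PosDef :=
  (hΩ.smul hlam).add_posSemidef <| (posSemidef_sum _ fun i _ => by
    simpa using posSemidef_vecMulVec_self_star (X i)).smul hc

end Matrix

theorem stmt6_general (n m J : ℕ)
    (y : Fin n → ℝ) (X : Fin n → (Fin m → ℝ))
    (Ω : Matrix (Fin m) (Fin m) ℝ) (hΩ : Ω.PosDef)
    (σ2 lam : ℝ) (hσ : 0 < σ2) (hlam : 0 < lam)
    (F : (Fin m → ℝ) → ℝ)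
    (hF : ∀ d, F d = σ2⁻¹ * ∑ i, (y i - X i ⬝ᵥ d) ^ 2 + lam * (d ⬝ᵥ (Ω *ᵥ d)))
    (Binv B : Matrix (Fin m) (Fin m) ℝ)
    (hBinv : Binv = lam • Ω + σ2⁻¹ • ∑ i, vecMulVec (X i) (X i))
    (hB : B = Binv⁻¹)
    (b : Fin m → ℝ) (hb : b = σ2⁻¹ • ∑ i, y i • X i)
    (L : Matrix (Fin m) (Fin J) ℝ) (hL : L.rank = J)
    (Lamhat : Fin J → ℝ)
    (hLamhat : Lamhat = (Lᵀ * B * L)⁻¹ *ᵥ (Lᵀ *ᵥ (B *ᵥ b)))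
    (dtilde : Fin m → ℝ) (hdtilde : dtilde = B *ᵥ (b - L *ᵥ Lamhat)) :
    ∀ d, Lᵀ *ᵥ d = 0 →
      F d = F dtilde + (d - dtilde) ⬝ᵥ (Binv *ᵥ (d - dtilde)) := by
  intro d hd
  have hBinvPD : Binv.PosDef :=
    hBinv ▸ posDef_smul_add_smul_sum_vecMulVec hΩ hlam (inv_nonneg.mpr hσ.le) X
  have hBPD : B.PosDef := hB ▸ hBinvPD.inv
  have hLBL : (Lᵀ * B * L).PosDef := by
    simpa using hBPD.conjTranspose_mul_mul_same (mulVec_injective_of_rank_eq_card (by simpa))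
  have hstationary : Binv *ᵥ dtilde = b - L *ᵥ Lamhat := by
    rw [hdtilde, mulVec_mulVec, hB,
      mul_nonsing_inv _ ((isUnit_iff_isUnit_det _).mp hBinvPD.isUnit), one_mulVec]
  have hfeasible : Lᵀ *ᵥ dtilde = 0 := by
    rw [hdtilde, hLamhat]
    exact transpose_mulVec_mulVec_sub_eq_zero ((isUnit_iff_isUnit_det _).mp hLBL.isUnit) b
  rw [hF, hF, sum_sq_sub_dotProduct_add_penalty_eq, sum_sq_sub_dotProduct_add_penalty_eq,
    ← hBinv, ← hb,
    (isHermitian_iff_isSymm.mp hBinvPD.isHermitian).dotProduct_mulVec_sub_two_mul_eq_of_lagrange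
      hstationary hfeasible hd]
  ring

/-- For every d satisfying Lᵀ d = 0, the penalized least squares objective satisfies
F(d) = F(d̃) + (d − d̃)ᵀ B⁻¹ (d − d̃), where d̃ = B(b − L Λ̂), Λ̂ = (Lᵀ B L)⁻¹ Lᵀ B b. -/
theorem stmt6 (n m J : ℕ) (hn : 0 < n) (hm : 0 < m) (hJ : 0 < J) (hJm : J ≤ m)
    (y : Fin n → ℝ) (X : Fin n → (Fin m → ℝ))
    (Ω : Matrix (Fin m) (Fin m) ℝ) (hΩ : Ω.PosDef)
    (σ2 lam : ℝ) (hσ : 0 < σ2) (hlam : 0 < lam)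
    (F : (Fin m → ℝ) → ℝ)
    (hF : ∀ d, F d = σ2⁻¹ * ∑ i, (y i - X i ⬝ᵥ d) ^ 2 + lam * (d ⬝ᵥ (Ω *ᵥ d)))
    (Binv B : Matrix (Fin m) (Fin m) ℝ)
    (hBinv : Binv = lam • Ω + σ2⁻¹ • ∑ i, vecMulVec (X i) (X i))
    (hB : B = Binv⁻¹)
    (b : Fin m → ℝ) (hb : b = σ2⁻¹ • ∑ i, y i • X i)
    (L : Matrix (Fin m) (Fin J) ℝ) (hL : L.rank = J)
    (Lamhat : Fin J → ℝ)
    (hLamhat : Lamhat = (Lᵀ * B * L)⁻¹ *ᵥ (Lᵀ *ᵥ (B *ᵥ b)))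
    (dtilde : Fin m → ℝ) (hdtilde : dtilde = B *ᵥ (b - L *ᵥ Lamhat)) :
    ∀ d, Lᵀ *ᵥ d = 0 →
      F d = F dtilde + (d - dtilde) ⬝ᵥ (Binv *ᵥ (d - dtilde)) :=
  stmt6_general n m J y X Ω hΩ σ2 lam hσ hlam F hF Binv B hBinv hB b hb L hL Lamhat hLamhat dtilde
    hdtilde
end

section
/- If X is uniformly distributed on the interval (ℓ, u), then the random variable λ = X⁻² has a distribution absolutely continuous with respect to Lebesgue measure, with density λ ↦ (2(u − ℓ))⁻¹ λ^{−3/2} on the interval (u⁻², ℓ⁻²) and 0 elsewhere. Equivalently, the pushforward of the uniform probability measure on (ℓ, u) under the map x ↦ x⁻² equals the measure with this density. -/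
/-!
The map `x ↦ x⁻²` is a differentiable, strictly decreasing bijection of `(ℓ, u)` onto
`(u⁻², ℓ⁻²)`, so by the one-dimensional change of variables formula the pushforward of a
constant density `c` on `(ℓ, u)` has density `ρ` on the image as soon as `|φ'(x)| ρ(φ x) = c`.
For `φ x = x⁻²` this holds with `ρ t = c t^(-3/2) / 2`, because `|φ'(x)| (x⁻²)^(-3/2) = 2`.
-/

open MeasureTheory Set

theorem map_smul_restrict_eq_withDensity_indicator {s : Set ℝ} {f f' : ℝ → ℝ}
    (hs : MeasurableSet s) (hf' : ∀ x ∈ s, HasDerivWithinAt f (f' x) s x) (hf : InjOn f s)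
    (hfm : Measurable f) {c : ENNReal} {g : ℝ → ENNReal}
    (hg : ∀ x ∈ s, ENNReal.ofReal |f' x| * g (f x) = c) :
    Measure.map f (c • volume.restrict s) = volume.withDensity ((f '' s).indicator g) := by
  ext A hA
  have hsA : MeasurableSet (s ∩ f ⁻¹' A) := hs.inter (hfm hA)
  have himage : MeasurableSet (f '' s) :=
    measurable_image_of_fderivWithin hs (fun x hx => (hf' x hx).hasFDerivWithinAt) hf
  calc Measure.map f (c • volume.restrict s) A
      = ∫⁻ _ in s ∩ f ⁻¹' A, c := by
        rw [Measure.map_apply hfm hA, Measure.smul_apply, Measure.restrict_apply (hfm hA),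
          setLIntegral_const, inter_comm, smul_eq_mul, mul_comm]
    _ = ∫⁻ x in s ∩ f ⁻¹' A, ENNReal.ofReal |f' x| * g (f x) :=
        setLIntegral_congr_fun hsA fun x hx => (hg x hx.1).symm
    _ = ∫⁻ t in f '' (s ∩ f ⁻¹' A), g t :=
        (lintegral_image_eq_lintegral_abs_deriv_mul hsA
          (fun x hx => (hf' x hx.1).mono inter_subset_left) (hf.mono inter_subset_left) g).symm
    _ = volume.withDensity ((f '' s).indicator g) A := by
        rw [withDensity_apply _ hA, lintegral_indicator himage, Measure.restrict_restrict himage,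
          image_inter_preimage, inter_comm]

theorem strictAntiOn_inv_sq : StrictAntiOn (fun x : ℝ => (x ^ 2)⁻¹) (Ioi 0) := by
  intro x hx y _ hxy
  exact inv_strictAnti₀ (pow_pos hx 2) (pow_lt_pow_left₀ hxy (le_of_lt hx) two_ne_zero)

theorem hasDerivAt_inv_sq {x : ℝ} (hx : x ≠ 0) :
    HasDerivAt (fun x : ℝ => (x ^ 2)⁻¹) (-2 / x ^ 3) x := by
  refine ((hasDerivAt_pow 2 x).fun_inv (pow_ne_zero 2 hx)).congr_deriv ?_
  field_simp
  ring

theorem image_inv_sq_Ioo {a b : ℝ} (ha : 0 < a) (hab : a ≤ b) :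
    (fun x : ℝ => (x ^ 2)⁻¹) '' Ioo a b = Ioo (b ^ 2)⁻¹ (a ^ 2)⁻¹ := by
  have hIcc : Icc a b ⊆ Ioi 0 := fun x hx => ha.trans_le hx.1
  refine ContinuousOn.image_Ioo_of_strictAntiOn hab ?_ (strictAntiOn_inv_sq.mono hIcc)
  exact (continuousOn_pow 2).inv₀ fun x hx => pow_ne_zero 2 (hIcc hx).ne'

theorem abs_deriv_inv_sq_mul_rpow {x : ℝ} (hx : 0 < x) :
    |-2 / x ^ 3| * ((x ^ 2)⁻¹) ^ (-(3 : ℝ) / 2) = 2 := by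
  have hpow : ((x ^ 2)⁻¹) ^ (-(3 : ℝ) / 2) = x ^ 3 := by
    rw [← Real.rpow_natCast, ← Real.rpow_neg_one, ← Real.rpow_mul hx.le,
      ← Real.rpow_mul hx.le]
    norm_num
  rw [hpow, abs_div, abs_neg, abs_of_pos (by positivity), abs_of_pos (by positivity)]
  field_simp

/-- If X is uniformly distributed on (ℓ, u), then λ = X⁻² has density
λ ↦ (2(u − ℓ))⁻¹ λ^(−3/2) on (u⁻², ℓ⁻²) and 0 elsewhere: the pushforward of the
uniform probability measure on (ℓ, u) under x ↦ x⁻² equals the measure with this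
density. -/
theorem stmt16 (ℓ u : ℝ) (h0 : 0 < ℓ) (hlu : ℓ < u) :
    Measure.map (fun x : ℝ => (x ^ 2)⁻¹)
        ((ENNReal.ofReal (u - ℓ))⁻¹ • volume.restrict (Set.Ioo ℓ u)) =
      volume.withDensity
        (Set.indicator (Set.Ioo (u ^ 2)⁻¹ (ℓ ^ 2)⁻¹)
          (fun t => ENNReal.ofReal ((2 * (u - ℓ))⁻¹ * t ^ (-(3 : ℝ) / 2)))) := by
  have hpos : Ioo ℓ u ⊆ Ioi 0 := fun x hx => h0.trans hx.1
  rw [← image_inv_sq_Ioo h0 hlu.le]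
  refine map_smul_restrict_eq_withDensity_indicator measurableSet_Ioo
    (fun x hx => (hasDerivAt_inv_sq (hpos hx).ne').hasDerivWithinAt)
    (strictAntiOn_inv_sq.mono hpos).injOn (by fun_prop) fun x hx => ?_
  rw [← ENNReal.ofReal_mul (abs_nonneg _), ← ENNReal.ofReal_inv_of_pos (sub_pos.2 hlu)]
  congr 1
  rw [mul_left_comm, abs_deriv_inv_sq_mul_rpow (hpos hx)]
  field_simp
end
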